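/- arXiv:math/0606327 — 2 statements merged into one kernel-verified Lean document; each statement's English description precedes it below -/
import Mathlib

section
/- For every n ≥ 1 there exists a skew-adjoint finite-rank operator ρₙ on H = H₊ ⊕ H₋ (with off-diagonal blocks aₙ and −aₙ*, where aₙ = (π/2)vₙ for a partial isometry vₙ : H₋ → H₊ of rank n) such that exp(ρₙ) is unitary, exp(ρₙ) − 1 has finite rank, and ‖[d, exp(ρₙ)]‖₂ ≥ √n. -/
open ContinuousLinearMap

noncomputable section

/-- `T` is a Hilbert–Schmidt operator: `∑ᵢ ‖T eᵢ‖² < ∞` for some Hilbert basis `(eᵢ)`. -/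
def IsHS {H : Type*} [NormedAddCommGroup H] [InnerProductSpace ℂ H]
    (T : H →L[ℂ] H) : Prop :=
  ∃ (ι : Type) (b : HilbertBasis ι ℂ H), Summable fun i => ‖T (b i)‖ ^ 2

/-- `T` is trace class: `T` is a product of two Hilbert–Schmidt operators. -/
def IsTC {H : Type*} [NormedAddCommGroup H] [InnerProductSpace ℂ H]
    (T : H →L[ℂ] H) : Prop :=
  ∃ A B : H →L[ℂ] H, IsHS A ∧ IsHS B ∧ T = A * B

/-- The operator `d = i(p₊ - p₋)` associated to the orthogonal projection `P = p₊`
(so `p₋ = 1 - P`). -/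
def dOp {H : Type*} [NormedAddCommGroup H] [InnerProductSpace ℂ H]
    (P : H →L[ℂ] H) : H →L[ℂ] H :=
  Complex.I • (P - (1 - P))

open InnerProductSpace
open scoped InnerProductSpace

/-!
Take orthonormal `e₁, …, eₙ` in `H₊ = ran P` and `f₁, …, fₙ` in `H₋`, and put
`v = ∑ⱼ |eⱼ⟩⟨fⱼ|`, so that `v* = ∑ⱼ |fⱼ⟩⟨eⱼ|` and `s = v - v*` satisfies `s³ = -s`. Hence
`exp (θ s) = 1 + sin θ • s + (1 - cos θ) • s²`, so `exp ρ = 1 + s + s²` for `ρ = (π/2) s`. As `s`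
anticommutes with `d` while `s²` commutes with it, `[d, exp ρ] = 2i (v + v*)`, and the
Hilbert–Schmidt norm of `v + v*` is computed by Parseval: `‖[d, exp ρ]‖₂² = 4 · 2n`.
-/

section ExpOfCubeEqNeg

variable {A : Type*} [NormedRing A] [NormedAlgebra ℂ A] {s : A}

lemma pow_two_mul_add_one_of_pow_three_eq_neg (hs : s ^ 3 = -s) (m : ℕ) :
    s ^ (2 * m + 1) = (-1 : ℂ) ^ m • s := by
  induction m with
  | zero => simp
  | succ m ih =>
    rw [show 2 * (m + 1) + 1 = 2 * m + 1 + 2 by ring, pow_add, ih, smul_mul_assoc, ← pow_succ',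
      hs, pow_succ, smul_neg, mul_neg_one, neg_smul]

lemma pow_two_mul_add_two_of_pow_three_eq_neg (hs : s ^ 3 = -s) (m : ℕ) :
    s ^ (2 * m + 2) = (-1 : ℂ) ^ m • s ^ 2 := by
  rw [pow_succ, pow_two_mul_add_one_of_pow_three_eq_neg hs, smul_mul_assoc, ← pow_two]

theorem NormedSpace.exp_smul_of_pow_three_eq_neg (hs : s ^ 3 = -s) (c : ℂ) :
    NormedSpace.exp (c • s) = 1 + Complex.sin c • s + (1 - Complex.cos c) • s ^ 2 := by
  have hcos : HasSum (fun m : ℕ => -((-1) ^ (m + 1) * c ^ (2 * (m + 1)) / (2 * (m + 1)).factorial))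
      (1 - Complex.cos c) := by
    simpa using ((hasSum_nat_add_iff' 1).mpr (Complex.hasSum_cos c)).neg
  have hodd : ∀ m : ℕ, ((2 * m + 1).factorial⁻¹ : ℂ) • (c • s) ^ (2 * m + 1)
      = ((-1) ^ m * c ^ (2 * m + 1) / (2 * m + 1).factorial) • s := by
    intro m
    rw [smul_pow, pow_two_mul_add_one_of_pow_three_eq_neg hs, smul_smul, smul_smul]
    ring_nf
  have heven : ∀ m : ℕ, ((2 * (m + 1)).factorial⁻¹ : ℂ) • (c • s) ^ (2 * (m + 1))
      = -((-1) ^ (m + 1) * c ^ (2 * (m + 1)) / (2 * (m + 1)).factorial) • s ^ 2 := by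
    intro m
    rw [smul_pow, mul_add_one, pow_two_mul_add_two_of_pow_three_eq_neg hs, smul_smul, smul_smul]
    ring_nf
  rw [NormedSpace.exp_eq_tsum ℂ]
  refine HasSum.tsum_eq ?_
  rw [add_right_comm]
  refine HasSum.even_add_odd ?_ ?_
  · refine (hasSum_nat_add_iff' 1).mp ?_
    simpa [heven] using (hcos.smul_const (s ^ 2))
  · simpa [hodd] using (Complex.hasSum_sin c).smul_const s

end ExpOfCubeEqNeg

section CornerPair

/-! The hypotheses `p * v = v`, `v * p = 0`, `p * w = 0`, `w * p = w` say that `v` lies in the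
corner `p R (1 - p)` and `w` in `(1 - p) R p`. -/

variable {R : Type*} [Ring R] {p v w : R}

lemma mul_self_eq_zero_of_corner (hpv : p * v = v) (hvp : v * p = 0) (hpw : p * w = 0)
    (hwp : w * p = w) : v * v = 0 ∧ w * w = 0 :=
  ⟨calc v * v = v * p * v := by rw [mul_assoc, hpv]
      _ = 0 := by rw [hvp, zero_mul],
    calc w * w = w * p * w := by rw [hwp]
      _ = 0 := by rw [mul_assoc, hpw, mul_zero]⟩

lemma sub_sq_of_corner (hpv : p * v = v) (hvp : v * p = 0) (hpw : p * w = 0) (hwp : w * p = w) :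
    (v - w) ^ 2 = -(v * w + w * v) := by
  obtain ⟨hvv, hww⟩ := mul_self_eq_zero_of_corner hpv hvp hpw hwp
  rw [sq, sub_mul, mul_sub, mul_sub, hvv, hww]
  abel

lemma sub_pow_three_of_corner (hpv : p * v = v) (hvp : v * p = 0) (hpw : p * w = 0)
    (hwp : w * p = w) (hvwv : v * w * v = v) (hwvw : w * v * w = w) :
    (v - w) ^ 3 = -(v - w) := by
  obtain ⟨hvv, hww⟩ := mul_self_eq_zero_of_corner hpv hvp hpw hwp
  rw [pow_succ, sub_sq_of_corner hpv hvp hpw hwp, neg_mul, add_mul, mul_sub, mul_sub, hvwv, hwvw,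
    mul_assoc, hww, mul_assoc w, hvv, mul_zero, mul_zero]
  abel

lemma commutator_one_add_sub_add_sub_sq_of_corner (hpv : p * v = v) (hvp : v * p = 0)
    (hpw : p * w = 0) (hwp : w * p = w) :
    p * (1 + (v - w) + (v - w) ^ 2) - (1 + (v - w) + (v - w) ^ 2) * p = v + w := by
  rw [sub_sq_of_corner hpv hvp hpw hwp]
  simp only [mul_add, add_mul, mul_sub, sub_mul, mul_neg, neg_mul, mul_one, one_mul, hpv, hvp,
    hpw, hwp, ← mul_assoc, mul_assoc v w p, mul_assoc w v p, mul_zero, zero_mul]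
  abel

end CornerPair

theorem NormedSpace.exp_pi_div_two_smul_sub_of_corner {A : Type*} [NormedRing A]
    [NormedAlgebra ℂ A] {p v w : A} (hpv : p * v = v) (hvp : v * p = 0) (hpw : p * w = 0)
    (hwp : w * p = w) (hvwv : v * w * v = v) (hwvw : w * v * w = w) :
    NormedSpace.exp (((Real.pi / 2 : ℝ) : ℂ) • (v - w)) = 1 + (v - w) + (v - w) ^ 2 := by
  rw [NormedSpace.exp_smul_of_pow_three_eq_neg
      (sub_pow_three_of_corner hpv hvp hpw hwp hvwv hwvw), ← Complex.ofReal_sin,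
    ← Complex.ofReal_cos, Real.sin_pi_div_two, Real.cos_pi_div_two]
  simp

lemma dOp_mul_sub_mul_dOp {H : Type*} [NormedAddCommGroup H] [InnerProductSpace ℂ H]
    (P X : H →L[ℂ] H) : dOp P * X - X * dOp P = (2 * Complex.I) • (P * X - X * P) := by
  rw [dOp, smul_mul_assoc, mul_smul_comm, ← smul_sub, mul_comm, mul_smul, two_smul]
  congr 1
  noncomm_ring

section SumRankOne

variable {𝕜 E : Type*} [RCLike 𝕜] [NormedAddCommGroup E] [InnerProductSpace 𝕜 E]
  {κ : Type*} [Fintype κ]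

theorem Submodule.exists_orthonormal_of_not_finiteDimensional (K : Submodule 𝕜 E)
    (hK : ¬ FiniteDimensional 𝕜 K) (n : ℕ) :
    ∃ e : Fin n → E, Orthonormal 𝕜 e ∧ ∀ j, e j ∈ K := by
  have hn : (n : Cardinal) ≤ Module.rank 𝕜 K :=
    (Cardinal.natCast_lt_aleph0 (n := n)).le.trans (not_lt.mp (mt Module.rank_lt_aleph0_iff.mp hK))
  obtain ⟨g, hg⟩ := exists_linearIndependent_of_le_rank hn
  exact ⟨K.subtypeₗᵢ ∘ gramSchmidtNormed 𝕜 g,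
    (gramSchmidtNormed_orthonormal hg).comp_linearIsometry K.subtypeₗᵢ,
    fun j => (gramSchmidtNormed 𝕜 g j).2⟩

variable (𝕜) in
def sumRankOne (e f : κ → E) : E →L[𝕜] E := ∑ j, rankOne 𝕜 (e j) (f j)

lemma sumRankOne_apply (e f : κ → E) (x : E) :
    sumRankOne 𝕜 e f x = ∑ j, ⟪f j, x⟫_𝕜 • e j := by
  simp [sumRankOne]

lemma sumRankOne_zero_left (f : κ → E) : sumRankOne 𝕜 (fun _ => 0) f = 0 := by
  simp [sumRankOne]

lemma sumRankOne_zero_right (e : κ → E) : sumRankOne 𝕜 e (fun _ => 0) = 0 := by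
  simp [sumRankOne]

lemma adjoint_sumRankOne [CompleteSpace E] (e f : κ → E) :
    adjoint (sumRankOne 𝕜 e f) = sumRankOne 𝕜 f e := by
  simp [sumRankOne, map_sum]

lemma mul_sumRankOne (T : E →L[𝕜] E) (e f : κ → E) :
    T * sumRankOne 𝕜 e f = sumRankOne 𝕜 (fun j => T (e j)) f := by
  simp [sumRankOne, Finset.mul_sum, mul_def, comp_rankOne]

lemma sumRankOne_mul [CompleteSpace E] (e f : κ → E) (T : E →L[𝕜] E) :
    sumRankOne 𝕜 e f * T = sumRankOne 𝕜 e (fun j => adjoint T (f j)) := by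
  simp [sumRankOne, Finset.sum_mul, mul_def, rankOne_comp]

lemma sumRankOne_apply_of_orthonormal (e : κ → E) {f : κ → E} (hf : Orthonormal 𝕜 f) (k : κ) :
    sumRankOne 𝕜 e f (f k) = e k := by
  classical
  simp [sumRankOne_apply, orthonormal_iff_ite.mp hf]

lemma sumRankOne_mul_sumRankOne (e : κ → E) {f : κ → E} (hf : Orthonormal 𝕜 f) (g : κ → E) :
    sumRankOne 𝕜 e f * sumRankOne 𝕜 f g = sumRankOne 𝕜 e g := by
  simp only [mul_sumRankOne, sumRankOne_apply_of_orthonormal e hf]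

lemma sumRankOne_mul_sumRankOne_mul_sumRankOne {e f : κ → E} (he : Orthonormal 𝕜 e)
    (hf : Orthonormal 𝕜 f) :
    sumRankOne 𝕜 e f * sumRankOne 𝕜 f e * sumRankOne 𝕜 e f = sumRankOne 𝕜 e f := by
  rw [sumRankOne_mul_sumRankOne e hf, sumRankOne_mul_sumRankOne e he]

lemma sumRankOne_apply_mem_span (e f : κ → E) (x : E) :
    sumRankOne 𝕜 e f x ∈ Submodule.span 𝕜 (Set.range e) := by
  rw [sumRankOne_apply]
  exact Submodule.sum_mem _ fun j _ => Submodule.smul_mem _ _ (Submodule.subset_span ⟨j, rfl⟩)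

lemma sumRankOne_sub_sumRankOne_apply_mem_span (e f : κ → E) (x : E) :
    (sumRankOne 𝕜 e f - sumRankOne 𝕜 f e) x ∈ Submodule.span 𝕜 (Set.range e ∪ Set.range f) :=
  sub_mem (Submodule.span_mono Set.subset_union_left (sumRankOne_apply_mem_span e f x))
    (Submodule.span_mono Set.subset_union_right (sumRankOne_apply_mem_span f e x))

lemma finiteDimensional_range_of_forall_apply_mem_span {s : Set E} (hs : s.Finite)
    {T : E →L[𝕜] E} (hT : ∀ x, T x ∈ Submodule.span 𝕜 s) :
    FiniteDimensional 𝕜 (LinearMap.range (T : E →ₗ[𝕜] E)) :=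
  haveI := FiniteDimensional.span_of_finite 𝕜 hs
  Submodule.finiteDimensional_of_le (by rintro _ ⟨x, rfl⟩; exact hT x)

lemma star_ofReal_smul_sumRankOne_sub [CompleteSpace E] (r : ℝ) (e f : κ → E) :
    star ((r : 𝕜) • (sumRankOne 𝕜 e f - sumRankOne 𝕜 f e))
      = -((r : 𝕜) • (sumRankOne 𝕜 e f - sumRankOne 𝕜 f e)) := by
  rw [star_smul, star_sub, star_eq_adjoint, star_eq_adjoint, adjoint_sumRankOne,
    adjoint_sumRankOne, RCLike.star_def, RCLike.conj_ofReal, ← smul_neg, neg_sub]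

lemma range_sumRankOne (e : κ → E) {f : κ → E} (hf : Orthonormal 𝕜 f) :
    LinearMap.range (sumRankOne 𝕜 e f : E →ₗ[𝕜] E) = Submodule.span 𝕜 (Set.range e) := by
  refine le_antisymm ?_ (Submodule.span_le.mpr ?_)
  · rintro _ ⟨x, rfl⟩
    exact sumRankOne_apply_mem_span e f x
  · rintro _ ⟨k, rfl⟩
    exact ⟨f k, sumRankOne_apply_of_orthonormal e hf k⟩

theorem Orthonormal.norm_sum_smul_sq {e : κ → E} (he : Orthonormal 𝕜 e) (c : κ → 𝕜) :
    ‖∑ j, c j • e j‖ ^ 2 = ∑ j, ‖c j‖ ^ 2 := by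
  have : ((‖∑ j, c j • e j‖ : ℝ) : 𝕜) ^ 2 = ∑ j, ((‖c j‖ : ℝ) : 𝕜) ^ 2 := by
    simp only [← inner_self_eq_norm_sq_to_K, he.inner_sum, RCLike.conj_mul]
  exact mod_cast this

theorem HilbertBasis.hasSum_norm_inner_sq {ι : Type*} (b : HilbertBasis ι 𝕜 E) (x : E) :
    HasSum (fun i => ‖⟪x, b i⟫_𝕜‖ ^ 2) (‖x‖ ^ 2) := by
  have := lp.hasSum_norm (p := 2) (by norm_num) (b.repr x)
  simp only [ENNReal.toReal_ofNat, b.repr_apply_apply, norm_inner_symm (b _),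
    LinearIsometryEquiv.norm_map] at this
  exact_mod_cast this

lemma hasSum_norm_sumRankOne_apply_sq {e : κ → E} (he : Orthonormal 𝕜 e) (f : κ → E)
    {ι : Type*} (b : HilbertBasis ι 𝕜 E) :
    HasSum (fun i => ‖sumRankOne 𝕜 e f (b i)‖ ^ 2) (∑ j, ‖f j‖ ^ 2) := by
  simp only [sumRankOne_apply, he.norm_sum_smul_sq]
  exact hasSum_sum fun j _ => b.hasSum_norm_inner_sq (f j)

end SumRankOne

theorem exists_orthonormal_of_isIdempotentElem {𝕜 H : Type*} [RCLike 𝕜] [NormedAddCommGroup H]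
    [InnerProductSpace 𝕜 H] {P : H →L[𝕜] H} (hP : IsIdempotentElem P)
    (hinfp : ¬ FiniteDimensional 𝕜 (LinearMap.range (P : H →ₗ[𝕜] H)))
    (hinfm : ¬ FiniteDimensional 𝕜 (LinearMap.range ((1 - P : H →L[𝕜] H) : H →ₗ[𝕜] H))) (n : ℕ) :
    ∃ e f : Fin n → H, Orthonormal 𝕜 e ∧ Orthonormal 𝕜 f ∧ (∀ j, P (e j) = e j) ∧
      ∀ j, P (f j) = 0 := by
  obtain ⟨e, he, hPe⟩ := Submodule.exists_orthonormal_of_not_finiteDimensional _ hinfp n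
  obtain ⟨f, hf, hPf⟩ := Submodule.exists_orthonormal_of_not_finiteDimensional _ hinfm n
  refine ⟨e, f, he, hf, fun j =>
    (LinearMap.IsIdempotentElem.mem_range_iff hP.toLinearMap).mp (hPe j), fun j => ?_⟩
  simpa using (LinearMap.IsIdempotentElem.mem_range_iff hP.one_sub.toLinearMap).mp (hPf j)

section Corner

variable {𝕜 H : Type*} [RCLike 𝕜] [NormedAddCommGroup H] [InnerProductSpace 𝕜 H]
  {P : H →L[𝕜] H} {κ : Type*} [Fintype κ] {e f : κ → H}

lemma inner_eq_zero_of_apply_eq_self_of_apply_eq_zero [CompleteSpace H] (hP : IsSelfAdjoint P)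
    {x y : H} (hx : P x = x) (hy : P y = 0) : ⟪x, y⟫_𝕜 = 0 := by
  calc ⟪x, y⟫_𝕜 = ⟪P x, y⟫_𝕜 := by rw [hx]
    _ = ⟪x, P y⟫_𝕜 := hP.isSymmetric x y
    _ = 0 := by rw [hy, inner_zero_right]

lemma mul_sumRankOne_of_apply_eq_self (hPe : ∀ j, P (e j) = e j) (f : κ → H) :
    P * sumRankOne 𝕜 e f = sumRankOne 𝕜 e f := by
  simp only [mul_sumRankOne, hPe]

lemma mul_sumRankOne_of_apply_eq_zero (hPf : ∀ j, P (f j) = 0) (e : κ → H) :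
    P * sumRankOne 𝕜 f e = 0 := by
  simp only [mul_sumRankOne, hPf]
  exact sumRankOne_zero_left e

lemma sumRankOne_mul_of_apply_eq_zero [CompleteSpace H] (hP : IsSelfAdjoint P)
    (hPf : ∀ j, P (f j) = 0) (e : κ → H) : sumRankOne 𝕜 e f * P = 0 := by
  simp only [sumRankOne_mul, hP.adjoint_eq, hPf]
  exact sumRankOne_zero_right e

lemma sumRankOne_mul_of_apply_eq_self [CompleteSpace H] (hP : IsSelfAdjoint P)
    (hPe : ∀ j, P (e j) = e j) (f : κ → H) : sumRankOne 𝕜 f e * P = sumRankOne 𝕜 f e := by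
  simp only [sumRankOne_mul, hP.adjoint_eq, hPe]

lemma hasSum_norm_sumRankOne_add_sumRankOne_apply_sq [CompleteSpace H] (hP : IsSelfAdjoint P)
    (he : Orthonormal 𝕜 e) (hf : Orthonormal 𝕜 f) (hPe : ∀ j, P (e j) = e j)
    (hPf : ∀ j, P (f j) = 0) {ι : Type*} (b : HilbertBasis ι 𝕜 H) :
    HasSum (fun i => ‖(sumRankOne 𝕜 e f + sumRankOne 𝕜 f e) (b i)‖ ^ 2)
      (2 * Fintype.card κ) := by
  have hpyth (x : H) : ‖(sumRankOne 𝕜 e f + sumRankOne 𝕜 f e) x‖ ^ 2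
      = ‖sumRankOne 𝕜 e f x‖ ^ 2 + ‖sumRankOne 𝕜 f e x‖ ^ 2 := by
    simp only [sq, add_apply]
    refine norm_add_sq_eq_norm_sq_add_norm_sq_of_inner_eq_zero (𝕜 := 𝕜) _ _ ?_
    exact inner_eq_zero_of_apply_eq_self_of_apply_eq_zero hP
      congr($(mul_sumRankOne_of_apply_eq_self hPe f) x)
      congr($(mul_sumRankOne_of_apply_eq_zero hPf e) x)
  have hcard {g : κ → H} (hg : Orthonormal 𝕜 g) : ∑ j, ‖g j‖ ^ 2 = Fintype.card κ := by
    simp [hg.1]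
  simpa only [hpyth, hcard he, hcard hf, two_mul] using
    (hasSum_norm_sumRankOne_apply_sq he f b).add (hasSum_norm_sumRankOne_apply_sq hf e b)

end Corner

section Rotation

variable {H : Type*} [NormedAddCommGroup H] [InnerProductSpace ℂ H] [CompleteSpace H]
  {P : H →L[ℂ] H} {κ : Type*} [Fintype κ] {e f : κ → H}

lemma exp_pi_div_two_smul_sumRankOne_sub (hP : IsSelfAdjoint P) (he : Orthonormal ℂ e)
    (hf : Orthonormal ℂ f) (hPe : ∀ j, P (e j) = e j) (hPf : ∀ j, P (f j) = 0) :
    NormedSpace.exp (((Real.pi / 2 : ℝ) : ℂ) • (sumRankOne ℂ e f - sumRankOne ℂ f e))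
      = 1 + (sumRankOne ℂ e f - sumRankOne ℂ f e) + (sumRankOne ℂ e f - sumRankOne ℂ f e) ^ 2 :=
  NormedSpace.exp_pi_div_two_smul_sub_of_corner (mul_sumRankOne_of_apply_eq_self hPe f)
    (sumRankOne_mul_of_apply_eq_zero hP hPf e) (mul_sumRankOne_of_apply_eq_zero hPf e)
    (sumRankOne_mul_of_apply_eq_self hP hPe f) (sumRankOne_mul_sumRankOne_mul_sumRankOne he hf)
    (sumRankOne_mul_sumRankOne_mul_sumRankOne hf he)

lemma dOp_mul_exp_sub_exp_mul_dOp (hP : IsSelfAdjoint P) (he : Orthonormal ℂ e)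
    (hf : Orthonormal ℂ f) (hPe : ∀ j, P (e j) = e j) (hPf : ∀ j, P (f j) = 0) :
    dOp P * NormedSpace.exp (((Real.pi / 2 : ℝ) : ℂ) • (sumRankOne ℂ e f - sumRankOne ℂ f e))
      - NormedSpace.exp (((Real.pi / 2 : ℝ) : ℂ) • (sumRankOne ℂ e f - sumRankOne ℂ f e)) * dOp P
      = (2 * Complex.I) • (sumRankOne ℂ e f + sumRankOne ℂ f e) := by
  rw [dOp_mul_sub_mul_dOp, exp_pi_div_two_smul_sumRankOne_sub hP he hf hPe hPf,
    commutator_one_add_sub_add_sub_sq_of_corner (mul_sumRankOne_of_apply_eq_self hPe f)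
      (sumRankOne_mul_of_apply_eq_zero hP hPf e) (mul_sumRankOne_of_apply_eq_zero hPf e)
      (sumRankOne_mul_of_apply_eq_self hP hPe f)]

end Rotation

theorem stmt5_general {H : Type*} [NormedAddCommGroup H] [InnerProductSpace ℂ H] [CompleteSpace H]
    (P : H →L[ℂ] H) (hP : IsSelfAdjoint P) (hP2 : P * P = P)
    (hinfp : ¬ FiniteDimensional ℂ (LinearMap.range (P : H →ₗ[ℂ] H)))
    (hinfm : ¬ FiniteDimensional ℂ (LinearMap.range ((1 - P : H →L[ℂ] H) : H →ₗ[ℂ] H)))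
    {ι : Type*} (b : HilbertBasis ι ℂ H) (n : ℕ) :
    ∃ ρ v : H →L[ℂ] H,
      v ∘L adjoint v ∘L v = v ∧
      P * v * (1 - P) = v ∧
      FiniteDimensional ℂ (LinearMap.range (v : H →ₗ[ℂ] H)) ∧
      Module.finrank ℂ (LinearMap.range (v : H →ₗ[ℂ] H)) = n ∧
      ρ = ((Real.pi / 2 : ℝ) : ℂ) • (v - adjoint v) ∧
      star ρ = -ρ ∧
      FiniteDimensional ℂ (LinearMap.range (ρ : H →ₗ[ℂ] H)) ∧
      NormedSpace.exp ρ ∈ unitary (H →L[ℂ] H) ∧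
      FiniteDimensional ℂ (LinearMap.range ((NormedSpace.exp ρ - 1 : H →L[ℂ] H) : H →ₗ[ℂ] H)) ∧
      Real.sqrt n ≤ Real.sqrt
        (∑' i, ‖(dOp P * NormedSpace.exp ρ - NormedSpace.exp ρ * dOp P) (b i)‖ ^ 2) := by
  obtain ⟨e, f, he, hf, hPe, hPf⟩ := exists_orthonormal_of_isIdempotentElem hP2 hinfp hinfm n
  have hexp := exp_pi_div_two_smul_sumRankOne_sub hP he hf hPe hPf
  have hs := sumRankOne_sub_sumRankOne_apply_mem_span (𝕜 := ℂ) e f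
  have hfin := (Set.finite_range e).union (Set.finite_range f)
  have hρ := star_ofReal_smul_sumRankOne_sub (𝕜 := ℂ) (Real.pi / 2) e f
  refine ⟨((Real.pi / 2 : ℝ) : ℂ) • (sumRankOne ℂ e f - sumRankOne ℂ f e), sumRankOne ℂ e f, ?_⟩
  rw [adjoint_sumRankOne]
  refine ⟨sumRankOne_mul_sumRankOne_mul_sumRankOne he hf, ?_, ?_, ?_, rfl, hρ, ?_, ?_, ?_, ?_⟩
  · rw [mul_sub, mul_one, mul_assoc, sumRankOne_mul_of_apply_eq_zero hP hPf,
      mul_sumRankOne_of_apply_eq_self hPe, mul_zero, sub_zero]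
  · rw [range_sumRankOne e hf]
    exact FiniteDimensional.span_of_finite ℂ (Set.finite_range e)
  · rw [range_sumRankOne e hf, finrank_span_eq_card he.linearIndependent, Fintype.card_fin]
  · exact finiteDimensional_range_of_forall_apply_mem_span hfin fun x =>
      Submodule.smul_mem _ _ (hs x)
  · let : NormedAlgebra ℚ (H →L[ℂ] H) := .restrictScalars ℚ ℂ (H →L[ℂ] H)
    exact NormedSpace.exp_mem_unitary_of_mem_skewAdjoint (skewAdjoint.mem_iff.mpr hρ)
  · refine finiteDimensional_range_of_forall_apply_mem_span hfin fun x => ?_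
    rw [hexp, add_assoc, add_sub_cancel_left, sq]
    exact add_mem (hs x) (hs _)
  · have h2I : ‖(2 * Complex.I : ℂ)‖ ^ 2 = 4 := by norm_num
    have hHS := hasSum_norm_sumRankOne_add_sumRankOne_apply_sq hP he hf hPe hPf b
    simp only [dOp_mul_exp_sub_exp_mul_dOp hP he hf hPe hPf, smul_apply, norm_smul, mul_pow, h2I,
      (hHS.mul_left 4).tsum_eq, Fintype.card_fin]
    exact Real.sqrt_le_sqrt (by linarith [n.cast_nonneg (α := ℝ)])

/-- For every `n ≥ 1` there is a skew-adjoint finite-rank `ρₙ = (π/2)(vₙ - vₙ*)`, built from a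
rank-`n` partial isometry `vₙ : H₋ → H₊`, such that `exp ρₙ` is unitary, `exp ρₙ - 1` has finite
rank, and `‖[d, exp ρₙ]‖₂ ≥ √n`. -/
theorem stmt5 {H : Type*} [NormedAddCommGroup H] [InnerProductSpace ℂ H] [CompleteSpace H]
    (P : H →L[ℂ] H) (hP : IsSelfAdjoint P) (hP2 : P * P = P)
    (hinfp : ¬ FiniteDimensional ℂ (LinearMap.range (P : H →ₗ[ℂ] H)))
    (hinfm : ¬ FiniteDimensional ℂ (LinearMap.range ((1 - P : H →L[ℂ] H) : H →ₗ[ℂ] H)))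
    {ι : Type*} (b : HilbertBasis ι ℂ H) (n : ℕ) (hn : 1 ≤ n) :
    ∃ ρ v : H →L[ℂ] H,
      v ∘L adjoint v ∘L v = v ∧
      P * v * (1 - P) = v ∧
      FiniteDimensional ℂ (LinearMap.range (v : H →ₗ[ℂ] H)) ∧
      Module.finrank ℂ (LinearMap.range (v : H →ₗ[ℂ] H)) = n ∧
      ρ = ((Real.pi / 2 : ℝ) : ℂ) • (v - adjoint v) ∧
      star ρ = -ρ ∧
      FiniteDimensional ℂ (LinearMap.range (ρ : H →ₗ[ℂ] H)) ∧
      NormedSpace.exp ρ ∈ unitary (H →L[ℂ] H) ∧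
      FiniteDimensional ℂ (LinearMap.range ((NormedSpace.exp ρ - 1 : H →L[ℂ] H) : H →ₗ[ℂ] H)) ∧
      Real.sqrt n ≤ Real.sqrt
        (∑' i, ‖(dOp P * NormedSpace.exp ρ - NormedSpace.exp ρ * dOp P) (b i)‖ ^ 2) :=
  stmt5_general P hP hP2 hinfp hinfm b n
end
end

section
/- With the basis and set J as above, there is no unitary g ∈ U_res (i.e., with off-diagonal blocks Hilbert–Schmidt) such that gJg⁻¹ is contained in the algebra of diagonal operators. Consequently, the Cartan subalgebras of u_res are not all conjugate under U_res. -/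
/-!
For `n > 0` the rotation `Jₙ : eₙ ↦ e₋ₙ ↦ -eₙ` (zero on the other basis vectors) lies in `J`.
If `g Jₙ g⁻¹` is diagonal, it is a skew-adjoint operator swapping `g eₙ` and `g e₋ₙ` up to sign,
so these two vectors have coordinates of equal modulus. Hence
`‖P g eₙ‖² + ‖(1 - P) g e₋ₙ‖² = ‖g e₋ₙ‖² = 1` for every `n > 0`, which is incompatible with the
off-diagonal blocks `P g (1 - P)` and `(1 - P) g P` being Hilbert–Schmidt.
-/

open ContinuousLinearMap

noncomputable section

/-- Index type `ℤ* = ℤ \ {0}` for the basis `{eₙ}` of `H`. -/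
abbrev Zstar := {n : ℤ // n ≠ 0}

/-- Negation on `ℤ*`. -/
def negZ (n : Zstar) : Zstar := ⟨-n.1, neg_ne_zero.mpr n.2⟩

open scoped InnerProductSpace

namespace HilbertBasis

variable {𝕜 E F ι κ : Type*} [RCLike 𝕜] [NormedAddCommGroup E] [InnerProductSpace 𝕜 E]
  [NormedAddCommGroup F] [InnerProductSpace 𝕜 F]

theorem hasSum_norm_inner_sq_s15 (b : HilbertBasis ι 𝕜 E) (x : E) :
    HasSum (fun i => ‖⟪b i, x⟫_𝕜‖ ^ 2) (‖x‖ ^ 2) := by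
  simpa [b.repr_apply_apply] using lp.hasSum_norm (p := 2) (by norm_num) (b.repr x)

/-- Both sums are rearrangements of `∑ i j, ‖⟪c j, T (b i)⟫‖ ^ 2`. -/
theorem summable_norm_adjoint_apply_sq [CompleteSpace E] [CompleteSpace F]
    (b : HilbertBasis ι 𝕜 E) (c : HilbertBasis κ 𝕜 F) {T : E →L[𝕜] F}
    (hT : Summable fun i => ‖T (b i)‖ ^ 2) : Summable fun j => ‖adjoint T (c j)‖ ^ 2 := by
  let f : ι × κ → ℝ := fun p => ‖⟪c p.2, T (b p.1)⟫_𝕜‖ ^ 2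
  have hf : 0 ≤ f := fun _ => by positivity
  have hrow (i : ι) : HasSum (fun j => f (i, j)) (‖T (b i)‖ ^ 2) := by
    simpa only [f] using c.hasSum_norm_inner_sq_s15 (T (b i))
  have hcol (j : κ) : HasSum (fun i => f (i, j)) (‖adjoint T (c j)‖ ^ 2) := by
    refine (b.hasSum_norm_inner_sq_s15 (adjoint T (c j))).congr_fun fun i => ?_
    simp only [f, adjoint_inner_right, norm_inner_symm]
  have hsum : Summable f := (summable_prod_of_nonneg hf).2
    ⟨fun i => (hrow i).summable, by simpa only [(hrow _).tsum_eq] using hT⟩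
  have := ((summable_prod_of_nonneg fun p => hf p.swap).1 hsum.prod_symm).2
  simpa only [Prod.swap_prod_mk, (hcol _).tsum_eq] using this

theorem norm_sq_apply_add_norm_sq_one_sub_apply (b : HilbertBasis ι 𝕜 E) {P : E →L[𝕜] E}
    {s : Set ι} (hPs : ∀ x, ∀ i ∈ s, ⟪b i, P x⟫_𝕜 = ⟪b i, x⟫_𝕜)
    (hPsc : ∀ x, ∀ i ∉ s, ⟪b i, P x⟫_𝕜 = 0) {u v : E}
    (huv : ∀ i, ‖⟪b i, u⟫_𝕜‖ = ‖⟪b i, v⟫_𝕜‖) :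
    ‖P u‖ ^ 2 + ‖(1 - P) v‖ ^ 2 = ‖v‖ ^ 2 := by
  refine ((b.hasSum_norm_inner_sq_s15 _).add (b.hasSum_norm_inner_sq_s15 _)).unique ?_
  convert b.hasSum_norm_inner_sq_s15 v using 2 with i
  simp only [sub_apply, inner_sub_right]
  by_cases hi : i ∈ s
  · simp [hPs _ i hi, huv i]
  · simp [hPsc _ i hi]

end HilbertBasis

section HilbertSchmidt

variable {H : Type*} [NormedAddCommGroup H] [InnerProductSpace ℂ H]

theorem IsHS.summable_norm_apply_sq [CompleteSpace H] {ι : Type*} {T : H →L[ℂ] H} (hT : IsHS T)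
    (b : HilbertBasis ι ℂ H) : Summable fun i => ‖T (b i)‖ ^ 2 := by
  obtain ⟨κ, c, hc⟩ := hT
  simpa using b.summable_norm_adjoint_apply_sq b (c.summable_norm_adjoint_apply_sq b hc)

theorem isHS_of_apply_eq_zero_of_notMem {ι : Type} (b : HilbertBasis ι ℂ H) (s : Finset ι)
    {T : H →L[ℂ] H} (hT : ∀ i ∉ s, T (b i) = 0) : IsHS T :=
  ⟨ι, b, summable_of_ne_finset_zero (s := s) fun i hi => by simp [hT i hi]⟩

end HilbertSchmidt

section SkewAdjoint

variable {𝕜 E : Type*} [RCLike 𝕜] [NormedAddCommGroup E] [InnerProductSpace 𝕜 E]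
  [CompleteSpace E] {K : E →L[𝕜] E} (hK : star K = -K) {e : E} {c : 𝕜} (he : K e = c • e)
include hK he

theorem norm_inner_apply_of_star_eq_neg (x : E) : ‖⟪e, K x⟫_𝕜‖ = ‖c‖ * ‖⟪e, x⟫_𝕜‖ := by
  rw [← adjoint_inner_left, ← star_eq_adjoint, hK, neg_apply, he, inner_neg_left, inner_smul_left,
    norm_neg, norm_mul, RCLike.norm_conj]

theorem norm_inner_eq_of_star_eq_neg {u v : E} (hu : K u = v) (hv : K v = -u) :
    ‖⟪e, u⟫_𝕜‖ = ‖⟪e, v⟫_𝕜‖ := by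
  have huv := norm_inner_apply_of_star_eq_neg hK he u
  have hvu := norm_inner_apply_of_star_eq_neg hK he v
  rw [hu] at huv
  rw [hv, inner_neg_right, norm_neg] at hvu
  nlinarith [norm_nonneg c, norm_nonneg ⟪e, u⟫_𝕜, norm_nonneg ⟪e, v⟫_𝕜]

end SkewAdjoint

section PlaneRotation

variable {𝕜 E ι : Type*} [RCLike 𝕜] [NormedAddCommGroup E] [InnerProductSpace 𝕜 E]

variable (𝕜) in
def planeRotation (e f : E) : E →L[𝕜] E :=
  (innerSL 𝕜 e).smulRight f - (innerSL 𝕜 f).smulRight e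

theorem planeRotation_apply (e f x : E) :
    planeRotation 𝕜 e f x = ⟪e, x⟫_𝕜 • f - ⟪f, x⟫_𝕜 • e := by
  simp [planeRotation]

theorem star_planeRotation [CompleteSpace E] (e f : E) :
    star (planeRotation 𝕜 e f) = -planeRotation 𝕜 e f := by
  rw [star_eq_adjoint, eq_comm, eq_adjoint_iff]
  intro x y
  simp only [neg_apply, planeRotation_apply, inner_neg_left, inner_sub_left, inner_sub_right,
    inner_smul_left, inner_smul_right, inner_conj_symm]
  ring

variable {v : ι → E} (hv : Orthonormal 𝕜 v) {i j : ι}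
include hv

theorem planeRotation_apply_left (hij : i ≠ j) : planeRotation 𝕜 (v i) (v j) (v i) = v j := by
  simp [planeRotation_apply, inner_self_eq_norm_sq_to_K, hv.1 i, hv.2 hij.symm]

theorem planeRotation_apply_right (hij : i ≠ j) : planeRotation 𝕜 (v i) (v j) (v j) = -v i := by
  simp [planeRotation_apply, inner_self_eq_norm_sq_to_K, hv.1 j, hv.2 hij]

theorem planeRotation_apply_of_ne {k : ι} (hki : k ≠ i) (hkj : k ≠ j) :
    planeRotation 𝕜 (v i) (v j) (v k) = 0 := by
  simp [planeRotation_apply, hv.2 hki.symm, hv.2 hkj.symm]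

theorem norm_inner_unitary_apply_eq [CompleteSpace E] (hij : i ≠ j) {g : E →L[𝕜] E}
    (hg : g ∈ unitary (E →L[𝕜] E)) {w : E} {c : 𝕜}
    (hw : (g * planeRotation 𝕜 (v i) (v j) * star g) w = c • w) :
    ‖⟪w, g (v i)⟫_𝕜‖ = ‖⟪w, g (v j)⟫_𝕜‖ := by
  have hgg (x : E) : star g (g x) = x := congr($(Unitary.star_mul_self_of_mem hg) x)
  refine norm_inner_eq_of_star_eq_neg ?_ hw ?_ ?_
  · simp [star_mul, star_planeRotation, mul_assoc]
  · simp [hgg, planeRotation_apply_left hv hij]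
  · simp [hgg, planeRotation_apply_right hv hij]

end PlaneRotation

section DOp

variable {H : Type*} [NormedAddCommGroup H] [InnerProductSpace ℂ H] {P : H →L[ℂ] H} {e : H}

theorem dOp_apply_of_apply_eq_self (h : P e = e) : dOp P e = Complex.I • e := by
  simp [dOp, h]

theorem dOp_apply_of_apply_eq_zero (h : P e = 0) : dOp P e = -Complex.I • e := by
  simp [dOp, h]

end DOp

theorem negZ_involutive : Function.Involutive negZ := fun n => Subtype.ext (neg_neg n.1)

theorem negZ_ne_self (n : Zstar) : negZ n ≠ n := fun h =>
  n.2 (by linarith [show -n.1 = n.1 from congrArg Subtype.val h])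

theorem exists_pos_add_negZ_lt_one {f g : Zstar → ℝ} (hf : Summable f) (hg : Summable g) :
    ∃ n : Zstar, 0 < n.1 ∧ f n + g (negZ n) < 1 := by
  have hsmall : ∀ᶠ n in Filter.cofinite, f n + g (negZ n) < 1 :=
    (hf.add (hg.comp_injective negZ_involutive.injective)).tendsto_cofinite_zero.eventually
      (gt_mem_nhds one_pos)
  have hpos : {n : Zstar | 0 < n.1}.Infinite :=
    Set.infinite_of_injective_forall_mem (f := fun k : ℕ => (⟨k + 1, by omega⟩ : Zstar))
      (fun a c h => by simpa using congrArg Subtype.val h) fun k => by simp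
  exact (Filter.frequently_cofinite_iff_infinite.2 hpos).and_eventually hsmall |>.exists

section ZstarBasis

variable {H : Type*} [NormedAddCommGroup H] [InnerProductSpace ℂ H]
  {P : H →L[ℂ] H} {b : HilbertBasis Zstar ℂ H}

theorem exists_real_planeRotation_apply_basis (n m : Zstar) :
    ∃ r : ℝ, planeRotation ℂ (b n) (b (negZ n)) (b m) = (r : ℂ) • b (negZ m) := by
  by_cases hmn : m = n
  · subst hmn
    exact ⟨1, by simp [planeRotation_apply_left b.orthonormal (negZ_ne_self m).symm]⟩
  by_cases hm : m = negZ n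
  · subst hm
    exact ⟨-1, by simp [planeRotation_apply_right b.orthonormal (negZ_ne_self n).symm,
      negZ_involutive n]⟩
  · exact ⟨0, by simp [planeRotation_apply_of_ne b.orthonormal hmn hm]⟩

variable (hb : ∀ n : Zstar, (n.1 < 0 → P (b n) = b n) ∧ (0 < n.1 → P (b n) = 0))
include hb

theorem exists_dOp_apply_basis (m : Zstar) : ∃ c : ℂ, dOp P (b m) = c • b m := by
  rcases m.2.lt_or_gt with hm | hm
  · exact ⟨_, dOp_apply_of_apply_eq_self ((hb m).1 hm)⟩
  · exact ⟨_, dOp_apply_of_apply_eq_zero ((hb m).2 hm)⟩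

theorem isHS_dOp_commutator_planeRotation (n : Zstar) :
    IsHS (dOp P * planeRotation ℂ (b n) (b (negZ n)) -
      planeRotation ℂ (b n) (b (negZ n)) * dOp P) := by
  refine isHS_of_apply_eq_zero_of_notMem b {n, negZ n} fun m hm => ?_
  simp only [Finset.mem_insert, Finset.mem_singleton, not_or] at hm
  have hR : planeRotation ℂ (b n) (b (negZ n)) (b m) = 0 :=
    planeRotation_apply_of_ne b.orthonormal hm.1 hm.2
  obtain ⟨c, hc⟩ := exists_dOp_apply_basis hb m
  simp [hc, hR]

theorem norm_sq_offDiag_add_eq_one [CompleteSpace H] (hP : IsSelfAdjoint P) {g : H →L[ℂ] H}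
    (hg : g ∈ unitary (H →L[ℂ] H)) {n : Zstar} (hn : 0 < n.1)
    (hdiag : ∀ m, ∃ c : ℂ, (g * planeRotation ℂ (b n) (b (negZ n)) * star g) (b m) = c • b m) :
    ‖(P * g * (1 - P)) (b n)‖ ^ 2 + ‖((1 - P) * g * P) (b (negZ n))‖ ^ 2 = 1 := by
  have hPneg : ∀ x, ∀ m ∈ {m : Zstar | m.1 < 0}, ⟪b m, P x⟫_ℂ = ⟪b m, x⟫_ℂ := fun x m hm => by
    rw [← adjoint_inner_left, ← star_eq_adjoint, hP.star_eq, (hb m).1 hm]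
  have hPpos : ∀ x, ∀ m ∉ {m : Zstar | m.1 < 0}, ⟪b m, P x⟫_ℂ = 0 := fun x m hm => by
    rw [← adjoint_inner_left, ← star_eq_adjoint, hP.star_eq,
      (hb m).2 ((not_lt.1 hm).lt_of_ne m.2.symm), inner_zero_left]
  have huv (m : Zstar) : ‖⟪b m, g (b n)⟫_ℂ‖ = ‖⟪b m, g (b (negZ n))⟫_ℂ‖ := by
    obtain ⟨c, hc⟩ := hdiag m
    exact norm_inner_unitary_apply_eq b.orthonormal (negZ_ne_self n).symm hg hc
  calc ‖(P * g * (1 - P)) (b n)‖ ^ 2 + ‖((1 - P) * g * P) (b (negZ n))‖ ^ 2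
      = ‖P (g (b n))‖ ^ 2 + ‖(1 - P) (g (b (negZ n)))‖ ^ 2 := by
        simp [(hb n).2 hn, (hb (negZ n)).1 (by simp [negZ, hn])]
    _ = ‖g (b (negZ n))‖ ^ 2 := b.norm_sq_apply_add_norm_sq_one_sub_apply hPneg hPpos huv
    _ = 1 := by simp [norm_map_of_mem_unitary hg, b.orthonormal.1]

end ZstarBasis

theorem stmt15_general {H : Type*} [NormedAddCommGroup H] [InnerProductSpace ℂ H] [CompleteSpace H]
    (P : H →L[ℂ] H) (hP : IsSelfAdjoint P)
    (b : HilbertBasis Zstar ℂ H)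
    (hb : ∀ n : Zstar, (n.1 < 0 → P (b n) = b n) ∧ (0 < n.1 → P (b n) = 0)) :
    ¬ ∃ g : H →L[ℂ] H, g ∈ unitary (H →L[ℂ] H) ∧
        IsHS (P * g * (1 - P)) ∧ IsHS ((1 - P) * g * P) ∧
        ∀ J : H →L[ℂ] H,
          (star J = -J ∧ IsHS (dOp P * J - J * dOp P) ∧
            ∀ n : Zstar, ∃ r : ℝ, J (b n) = (r : ℂ) • b (negZ n)) →
          ∀ n : Zstar, ∃ c : ℂ, (g * J * star g) (b n) = c • b n := by
  rintro ⟨g, hg, hA, hB, hdiag⟩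
  obtain ⟨n, hn, hlt⟩ :=
    exists_pos_add_negZ_lt_one (hA.summable_norm_apply_sq b) (hB.summable_norm_apply_sq b)
  exact hlt.ne (norm_sq_offDiag_add_eq_one hb hP hg hn (hdiag _ ⟨star_planeRotation _ _,
    isHS_dOp_commutator_planeRotation hb n, exists_real_planeRotation_apply_basis n⟩))

/-- There is no unitary `g ∈ U_res` conjugating the abelian algebra
`J = {J ∈ u_res : J eₙ ∈ ℝ e₋ₙ}` into the diagonal operators; hence the Cartan subalgebras of
`u_res` are not all conjugate under `U_res`. -/
theorem stmt15 {H : Type*} [NormedAddCommGroup H] [InnerProductSpace ℂ H] [CompleteSpace H]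
    (P : H →L[ℂ] H) (hP : IsSelfAdjoint P) (hP2 : P * P = P)
    (b : HilbertBasis Zstar ℂ H)
    (hb : ∀ n : Zstar, (n.1 < 0 → P (b n) = b n) ∧ (0 < n.1 → P (b n) = 0)) :
    ¬ ∃ g : H →L[ℂ] H, g ∈ unitary (H →L[ℂ] H) ∧
        IsHS (P * g * (1 - P)) ∧ IsHS ((1 - P) * g * P) ∧
        ∀ J : H →L[ℂ] H,
          (star J = -J ∧ IsHS (dOp P * J - J * dOp P) ∧
            ∀ n : Zstar, ∃ r : ℝ, J (b n) = (r : ℂ) • b (negZ n)) →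
          ∀ n : Zstar, ∃ c : ℂ, (g * J * star g) (b n) = c • b n :=
  stmt15_general P hP b hb
end
end
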